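/- arXiv:1806.01664 — 3 statements merged into one kernel-verified Lean document; each statement's English description precedes it below -/
import Mathlib

section
/- For any three pairwise disjoint nonempty clusters a, b, c with pair-sampling probabilities p(a,c) > 0 and p(b,c) > 0, the distance to the merged cluster satisfies d(a∪b, c) = ( (p(a)/p(a∪b)) · (1/d(a,c)) + (p(b)/p(a∪b)) · (1/d(b,c)) )⁻¹, where d(x,y) = p(x)p(y)/p(x,y). -/
open Finset

variable {V : Type*} [Fintype V] [DecidableEq V]

/-- Total weight of the graph. -/
noncomputable def totalW (A : V → V → ℝ) : ℝ := ∑ i, ∑ j, A i j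

/-- Pair-sampling probability of two clusters. -/
noncomputable def pPair (A : V → V → ℝ) (a b : Finset V) : ℝ :=
  (∑ i ∈ a, ∑ j ∈ b, A i j) / totalW A

/-- Marginal probability of a cluster. -/
noncomputable def pClus (A : V → V → ℝ) (a : Finset V) : ℝ :=
  (∑ i ∈ a, ∑ j, A i j) / totalW A

/-- Distance between clusters. -/
noncomputable def dClus (A : V → V → ℝ) (a b : Finset V) : ℝ :=
  pClus A a * pClus A b / pPair A a b

lemma pClus_pos_of_pPair (A : V → V → ℝ) (hnn : ∀ i j, 0 ≤ A i j) (hw : 0 < totalW A)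
    (a c : Finset V) (h : 0 < pPair A a c) : 0 < pClus A a := by
  have hle : pPair A a c ≤ pClus A a := by
    unfold pPair pClus
    apply div_le_div_of_nonneg_right _ hw.le
    · apply Finset.sum_le_sum
      intro i _
      exact Finset.sum_le_sum_of_subset_of_nonneg (Finset.subset_univ c) (fun j _ _ => hnn i j)
  linarith

lemma pClus_pos_of_pPair' (A : V → V → ℝ) (hsym : ∀ i j, A i j = A j i)
    (hnn : ∀ i j, 0 ≤ A i j) (hw : 0 < totalW A)
    (a c : Finset V) (h : 0 < pPair A a c) : 0 < pClus A c := by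
  have hle : pPair A a c ≤ pClus A c := by
    unfold pPair pClus
    apply div_le_div_of_nonneg_right _ hw.le
    rw [Finset.sum_comm]
    apply Finset.sum_le_sum
    intro j _
    calc ∑ i ∈ a, A i j = ∑ i ∈ a, A j i := by simp [hsym]
      _ ≤ ∑ i, A j i :=
        Finset.sum_le_sum_of_subset_of_nonneg (Finset.subset_univ a) (fun i _ _ => hnn j i)
  linarith

/-- Update formula: the distance from the merged cluster `a ∪ b` to `c` is the weighted
harmonic mean of `d(a,c)` and `d(b,c)`. -/
theorem update_formula (A : V → V → ℝ)
    (hsym : ∀ i j, A i j = A j i) (hnn : ∀ i j, 0 ≤ A i j) (hw : 0 < totalW A)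
    (a b c : Finset V) (ha : a.Nonempty) (hb : b.Nonempty) (hc : c.Nonempty)
    (hab : Disjoint a b) (hac : Disjoint a c) (hbc : Disjoint b c)
    (hpac : 0 < pPair A a c) (hpbc : 0 < pPair A b c) :
    dClus A (a ∪ b) c =
      (pClus A a / pClus A (a ∪ b) * (dClus A a c)⁻¹ +
       pClus A b / pClus A (a ∪ b) * (dClus A b c)⁻¹)⁻¹ := by
  have hpa := pClus_pos_of_pPair A hnn hw a c hpac
  have hpb := pClus_pos_of_pPair A hnn hw b c hpbc
  have hpc := pClus_pos_of_pPair' A hsym hnn hw a c hpac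
  have hsplitP : pPair A (a ∪ b) c = pPair A a c + pPair A b c := by
    unfold pPair
    rw [Finset.sum_union hab, add_div]
  have hsplitC : pClus A (a ∪ b) = pClus A a + pClus A b := by
    unfold pClus
    rw [Finset.sum_union hab, add_div]
  unfold dClus
  rw [hsplitP, hsplitC]
  have h1 : pClus A a + pClus A b > 0 := by linarith
  field_simp
end

section
/- Reducibility: for any three pairwise disjoint nonempty clusters a, b, c with p(a,c) > 0 and p(b,c) > 0 and positive masses p(a), p(b), p(c) > 0, one has d(a∪b, c) ≥ min(d(a,c), d(b,c)). -/
open Finset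

variable {V : Type*} [Fintype V] [DecidableEq V]

/-- Reducibility: merging `a` and `b` cannot decrease the minimum distance to `c`. -/
theorem reducibility (A : V → V → ℝ)
    (hsym : ∀ i j, A i j = A j i) (hnn : ∀ i j, 0 ≤ A i j) (hw : 0 < totalW A)
    (a b c : Finset V) (ha : a.Nonempty) (hb : b.Nonempty) (hc : c.Nonempty)
    (hab : Disjoint a b) (hac : Disjoint a c) (hbc : Disjoint b c)
    (hpa : 0 < pClus A a) (hpb : 0 < pClus A b) (hpc : 0 < pClus A c)
    (hpac : 0 < pPair A a c) (hpbc : 0 < pPair A b c) :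
    min (dClus A a c) (dClus A b c) ≤ dClus A (a ∪ b) c := by
  have hPadd : pClus A (a ∪ b) = pClus A a + pClus A b := by
    unfold pClus
    rw [Finset.sum_union hab, add_div]
  have hQadd : pPair A (a ∪ b) c = pPair A a c + pPair A b c := by
    unfold pPair
    rw [Finset.sum_union hab, add_div]
  simp only [dClus, hPadd, hQadd, add_mul]
  rcases le_or_gt (pClus A a * pClus A c / pPair A a c)
      (pClus A b * pClus A c / pPair A b c) with h | h
  · rw [div_le_div_iff₀ hpac hpbc] at h
    rw [min_eq_left (by rw [div_le_div_iff₀ hpac hpbc]; linarith),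
      div_le_div_iff₀ hpac (by linarith)]
    nlinarith [mul_pos hpa hpc, mul_pos hpb hpc]
  · rw [div_lt_div_iff₀ hpbc hpac] at h
    rw [min_eq_right (by rw [div_le_div_iff₀ hpbc hpac]; linarith),
      div_le_div_iff₀ hpbc (by linarith)]
    nlinarith [mul_pos hpa hpc, mul_pos hpb hpc]
end

section
/- Monotone merge distances: if at every step an agglomerative algorithm merges a pair of clusters at minimum distance, and the distance satisfies reducibility (d(a∪b,c) ≥ min(d(a,c), d(b,c)) for pairwise disjoint a,b,c), then the sequence of merge distances d₁ ≤ d₂ ≤ ... ≤ d_{n−1} is non-decreasing. -/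
open Finset

/-- Monotone merge distances: if an agglomerative algorithm always merges a pair of current
clusters at minimum distance, and the distance is symmetric and reducible, then the sequence
of recorded merge distances is non-decreasing. -/
theorem merge_distances_monotone {V : Type*} [DecidableEq V]
    (d : Finset V → Finset V → ENNReal)
    (hpos : ∀ x y, 0 < d x y)
    (hdsymm : ∀ x y, d x y = d y x)
    (hred : ∀ a b c : Finset V, Disjoint a b → Disjoint a c → Disjoint b c →
      min (d a c) (d b c) ≤ d (a ∪ b) c)
    (N : ℕ) (Cs : ℕ → Finset (Finset V)) (a b : ℕ → Finset V)
    (hdisj : ∀ t, t ≤ N → ∀ x ∈ Cs t, ∀ y ∈ Cs t, x ≠ y → Disjoint x y)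
    (haC : ∀ t, t < N → a t ∈ Cs t) (hbC : ∀ t, t < N → b t ∈ Cs t)
    (hab : ∀ t, t < N → a t ≠ b t)
    (hmin : ∀ t, t < N → ∀ x ∈ Cs t, ∀ y ∈ Cs t, x ≠ y → d (a t) (b t) ≤ d x y)
    (hstep : ∀ t, t < N → Cs (t + 1) = insert (a t ∪ b t) (((Cs t).erase (a t)).erase (b t))) :
    ∀ t, t + 1 < N → d (a t) (b t) ≤ d (a (t + 1)) (b (t + 1)) := by
  intro t ht
  have htN : t < N := Nat.lt_of_succ_lt ht
  have htN' : t ≤ N := le_of_lt htN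
  -- key: distance from merged cluster to any old cluster is ≥ current merge distance
  have key : ∀ x ∈ Cs t, x ≠ a t → x ≠ b t → d (a t) (b t) ≤ d (a t ∪ b t) x := by
    intro x hx hxa hxb
    have hDab : Disjoint (a t) (b t) := hdisj t htN' _ (haC t htN) _ (hbC t htN) (hab t htN)
    have hDax : Disjoint (a t) x := hdisj t htN' _ (haC t htN) _ hx (Ne.symm hxa)
    have hDbx : Disjoint (b t) x := hdisj t htN' _ (hbC t htN) _ hx (Ne.symm hxb)
    refine le_trans ?_ (hred _ _ _ hDab hDax hDbx)
    exact le_min (hmin t htN _ (haC t htN) _ hx (Ne.symm hxa))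
      (hmin t htN _ (hbC t htN) _ hx (Ne.symm hxb))
  have hab' : a (t+1) ≠ b (t+1) := hab (t+1) ht
  have haC' := haC (t+1) ht
  have hbC' := hbC (t+1) ht
  rw [hstep t htN] at haC' hbC'
  rcases Finset.mem_insert.mp haC' with ha1 | ha1 <;>
    rcases Finset.mem_insert.mp hbC' with hb1 | hb1
  · exact absurd (ha1.trans hb1.symm) hab'
  · -- a(t+1) = merged, b(t+1) old
    rw [ha1]
    have hb2 := Finset.mem_erase.mp hb1
    have hb3 := Finset.mem_erase.mp hb2.2
    exact key _ hb3.2 hb3.1 hb2.1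
  · rw [hb1, hdsymm (a (t+1))]
    have ha2 := Finset.mem_erase.mp ha1
    have ha3 := Finset.mem_erase.mp ha2.2
    exact key _ ha3.2 ha3.1 ha2.1
  · have ha3 := Finset.mem_erase.mp (Finset.mem_erase.mp ha1).2
    have hb3 := Finset.mem_erase.mp (Finset.mem_erase.mp hb1).2
    exact hmin t htN _ ha3.2 _ hb3.2 hab'
end
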